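/- Let A be a pre-Lie ring of cardinality p^n (p prime) that is both left nilpotent and right nilpotent. Then A^{[(n+1)^{n+1}]} = 0, i.e., A is strongly nilpotent with nilpotency index at most (n+1)^{n+1}. -/

import Mathlib

class PreLieRing (A : Type*) extends AddCommGroup A where
  mul : A → A → A
  mul_add : ∀ a b c : A, mul a (b + c) = mul a b + mul a c
  add_mul : ∀ a b c : A, mul (a + b) c = mul a c + mul b c
  left_symm : ∀ x y z : A,
    mul (mul x y) z - mul x (mul y z) = mul (mul y x) z - mul y (mul x z)

namespace PreLieRing

variable {A : Type*} [PreLieRing A]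

/-- The additive subgroup generated by products `a · b` with `a ∈ S`, `b ∈ T`. -/
def subMulSet (S T : Set A) : AddSubgroup A :=
  AddSubgroup.closure {x | ∃ a ∈ S, ∃ b ∈ T, x = mul a b}

def subMul (S T : AddSubgroup A) : AddSubgroup A := subMulSet (S : Set A) (T : Set A)

/-- `leftPow A m` is `A^{m+1}` of the left chain `A^1 = A`, `A^{i+1} = A·A^i`. -/
def leftPow (A : Type*) [PreLieRing A] : ℕ → AddSubgroup A
  | 0 => ⊤
  | m + 1 => subMul ⊤ (leftPow A m)

/-- `leftIdx A m = A^m` (paper indexing, junk value `A` at `m = 0`). -/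
def leftIdx (A : Type*) [PreLieRing A] (m : ℕ) : AddSubgroup A := leftPow A (m - 1)

/-- `rightPow A m` is `A^{(m+1)}` of the right chain `A^{(1)} = A`, `A^{(i+1)} = A^{(i)}·A`. -/
def rightPow (A : Type*) [PreLieRing A] : ℕ → AddSubgroup A
  | 0 => ⊤
  | m + 1 => subMul (rightPow A m) ⊤

def rightIdx (A : Type*) [PreLieRing A] (m : ℕ) : AddSubgroup A := rightPow A (m - 1)

/-- `strongPow A m` is `A^{[m+1]}` of the chain `A^{[1]} = A`,
`A^{[i+1]} = Σ_{j=1}^{i} A^{[j]}·A^{[i+1-j]}`. -/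
def strongPow (A : Type*) [PreLieRing A] : ℕ → AddSubgroup A
  | 0 => ⊤
  | m + 1 => ⨆ j : Fin (m + 1), subMul (strongPow A j) (strongPow A (m - j))
  termination_by m => m
  decreasing_by
  · exact j.isLt
  · exact Nat.lt_succ_of_le (Nat.sub_le m j)

def strongIdx (A : Type*) [PreLieRing A] (m : ℕ) : AddSubgroup A := strongPow A (m - 1)

/-- An ideal of a pre-Lie ring: an additive subgroup absorbing multiplication
on both sides. -/
def IsIdeal (I : AddSubgroup A) : Prop :=
  (∀ a : A, ∀ i ∈ I, mul i a ∈ I) ∧ (∀ a : A, ∀ i ∈ I, mul a i ∈ I)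

end PreLieRing

/-! Both one-sided chains are iterates of a monotone map on subgroups, so once two consecutive
terms agree the chain is constant; in a group of order `p ^ n` a chain that strictly decreases
until it reaches `0` therefore gets there within `n` steps, giving `A^{n+1} = A^{(n+1)} = 0`.

Left symmetry makes every `A^{(i)}` a left ideal. Suppose `A^{[t+1]} ⊆ A^{(m+1)}`. A product
`u · v` spanning `A^{[t(c+2)+1]}` either has `u ∈ A^{[t+1]}`, so that it lies in `A^{(m+2)}`, or
has `v ∈ A^{[t(c+1)+1]}`; by induction on `c` this gives
`A^{[t(c+1)+1]} ⊆ A^{(m+2)} + A^{c+1}`. Taking `c = n` kills the second summand, so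
`A^{[(n+1)^m + 1]} ⊆ A^{(m+1)}` for all `m`, and `m = n` gives the bound. -/

namespace AddSubgroup

variable {G : Type*} [AddGroup G] {p n : ℕ}

theorem prime_mul_card_dvd_of_lt (hp : p.Prime) (hcard : Nat.card G = p ^ n)
    {H K : AddSubgroup G} (hHK : H < K) : p * Nat.card H ∣ Nat.card K := by
  have : Finite G := Nat.finite_of_card_ne_zero (hcard ▸ pow_ne_zero n hp.ne_zero)
  obtain ⟨q, hq⟩ := card_dvd_of_le hHK.le
  have hq_dvd : q ∣ p ^ n := hcard ▸ (Dvd.intro_left _ hq.symm).trans (card_addSubgroup_dvd_card K)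
  obtain ⟨j, -, rfl⟩ := (Nat.dvd_prime_pow hp).mp hq_dvd
  have hj : j ≠ 0 := by
    rintro rfl
    exact hHK.ne (eq_of_le_of_card_ge hHK.le (by rw [hq, pow_zero, mul_one]))
  rw [hq, mul_comm]
  exact mul_dvd_mul_left _ (dvd_pow_self p hj)

theorem iterate_top_eq_bot (hp : p.Prime) (hcard : Nat.card G = p ^ n)
    {f : AddSubgroup G → AddSubgroup G} (hf : Monotone f) (hbot : ∃ k, f^[k] ⊤ = ⊥) :
    f^[n] ⊤ = ⊥ := by
  have hanti : Antitone fun i => f^[i] ⊤ := hf.antitone_iterate_of_map_le le_top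
  obtain ⟨k, hk⟩ := hbot
  have hstall : ∀ i, f^[i + 1] ⊤ = f^[i] ⊤ → f^[i] ⊤ = ⊥ := fun i hi => by
    rw [Function.iterate_succ_apply'] at hi
    rw [eq_bot_iff, ← Function.iterate_fixed hi k, ← Function.iterate_add_apply, ← hk]
    exact hanti (Nat.le_add_right k i)
  have hdvd : ∀ i, f^[i] ⊤ = ⊥ ∨ p ^ i * Nat.card (f^[i] ⊤) ∣ p ^ n := by
    intro i
    induction i with
    | zero => exact .inr (by rw [pow_zero, one_mul, Function.iterate_zero_apply, card_top, hcard])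
    | succ i ih =>
      rcases ih with hbot | hi
      · exact .inl (eq_bot_iff.mpr (hbot ▸ hanti i.le_succ))
      by_cases hstop : f^[i + 1] ⊤ = f^[i] ⊤
      · exact .inl (hstop.trans (hstall i hstop))
      refine .inr (dvd_trans ?_ hi)
      rw [pow_succ, mul_assoc]
      exact mul_dvd_mul_left _
        (prime_mul_card_dvd_of_lt hp hcard (lt_of_le_of_ne (hanti i.le_succ) hstop))
  refine (hdvd n).elim id fun h => eq_bot_of_card_eq _ ?_
  rw [← Nat.dvd_one, ← Nat.mul_dvd_mul_iff_left (pow_pos hp.pos n), mul_one]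
  exact h

end AddSubgroup

namespace PreLieRing

variable {A : Type*} [PreLieRing A]

theorem mul_mul_eq (x y z : A) :
    mul x (mul y z) = mul (mul x y) z - mul (mul y x) z + mul y (mul x z) := by
  rw [sub_add, ← left_symm x y z, sub_sub_cancel]

theorem mul_mem_subMul {S T : AddSubgroup A} {a b : A} (ha : a ∈ S) (hb : b ∈ T) :
    mul a b ∈ subMul S T :=
  AddSubgroup.subset_closure ⟨a, ha, b, hb, rfl⟩

theorem subMul_le {S T U : AddSubgroup A} (h : ∀ a ∈ S, ∀ b ∈ T, mul a b ∈ U) :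
    subMul S T ≤ U :=
  (AddSubgroup.closure_le U).mpr fun _ ⟨a, ha, b, hb, hx⟩ => hx ▸ h a ha b hb

theorem subMul_mono {S S' T T' : AddSubgroup A} (hS : S ≤ S') (hT : T ≤ T') :
    subMul S T ≤ subMul S' T' :=
  subMul_le fun _ ha _ hb => mul_mem_subMul (hS ha) (hT hb)

theorem mul_mem_of_mem_subMul {S T U : AddSubgroup A} {x w : A}
    (h : ∀ a ∈ S, ∀ b ∈ T, mul x (mul a b) ∈ U) (hw : w ∈ subMul S T) : mul x w ∈ U :=
  subMul_le (U := U.comap (AddMonoidHom.mk' (mul x) (mul_add x))) h hw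

theorem leftPow_eq_iterate (i : ℕ) : leftPow A i = (subMul ⊤)^[i] ⊤ := by
  induction i with
  | zero => rfl
  | succ i ih => rw [Function.iterate_succ_apply', ← ih, leftPow]

theorem rightPow_eq_iterate (i : ℕ) : rightPow A i = (subMul · ⊤)^[i] ⊤ := by
  induction i with
  | zero => rfl
  | succ i ih => rw [Function.iterate_succ_apply', ← ih, rightPow]

theorem rightPow_succ_le (i : ℕ) : rightPow A (i + 1) ≤ rightPow A i := by
  rw [rightPow_eq_iterate, rightPow_eq_iterate]
  exact (Monotone.antitone_iterate_of_map_le (fun _ _ h => subMul_mono h le_rfl) le_top)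
    i.le_succ

theorem mul_mem_rightPow (x : A) {w : A} : ∀ {i}, w ∈ rightPow A i → mul x w ∈ rightPow A i
  | 0, _ => AddSubgroup.mem_top _
  | i + 1, hw => mul_mem_of_mem_subMul (fun y hy z _ => by
      rw [mul_mul_eq]
      refine add_mem (sub_mem ?_ ?_) (mul_mem_subMul hy (AddSubgroup.mem_top _))
      · exact mul_mem_subMul (mul_mem_rightPow x hy) (AddSubgroup.mem_top _)
      · exact mul_mem_subMul (rightPow_succ_le i (mul_mem_subMul hy (AddSubgroup.mem_top _)))
          (AddSubgroup.mem_top _)) hw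

theorem leftPow_eq_bot_of_card {p n : ℕ} (hp : p.Prime) (hcard : Nat.card A = p ^ n)
    (hl : ∃ m, leftIdx A m = ⊥) : leftPow A n = ⊥ := by
  obtain ⟨m, hm⟩ := hl
  rw [leftPow_eq_iterate]
  refine AddSubgroup.iterate_top_eq_bot hp hcard (fun _ _ h => subMul_mono le_rfl h) ⟨m - 1, ?_⟩
  rwa [leftIdx, leftPow_eq_iterate] at hm

theorem rightPow_eq_bot_of_card {p n : ℕ} (hp : p.Prime) (hcard : Nat.card A = p ^ n)
    (hr : ∃ m, rightIdx A m = ⊥) : rightPow A n = ⊥ := by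
  obtain ⟨m, hm⟩ := hr
  rw [rightPow_eq_iterate]
  refine AddSubgroup.iterate_top_eq_bot hp hcard (fun _ _ h => subMul_mono h le_rfl) ⟨m - 1, ?_⟩
  rwa [rightIdx, rightPow_eq_iterate] at hm

theorem strongPow_succ_le {m : ℕ} {U : AddSubgroup A}
    (h : ∀ j ≤ m, ∀ u ∈ strongPow A j, ∀ v ∈ strongPow A (m - j), mul u v ∈ U) :
    strongPow A (m + 1) ≤ U := by
  rw [strongPow]
  exact iSup_le fun j => subMul_le (h j (Nat.lt_succ_iff.mp j.isLt))

theorem mul_mem_strongPow {i j : ℕ} {u v : A} (hu : u ∈ strongPow A i) (hv : v ∈ strongPow A j) :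
    mul u v ∈ strongPow A (i + j + 1) := by
  rw [strongPow]
  refine AddSubgroup.mem_iSup_of_mem (⟨i, by omega⟩ : Fin (i + j + 1)) (mul_mem_subMul hu ?_)
  rwa [Nat.add_sub_cancel_left]

theorem strongPow_antitone : Antitone (strongPow A) := by
  refine antitone_nat_of_succ_le fun i => ?_
  induction i using Nat.strong_induction_on with
  | _ i ih =>
    cases i with
    | zero => rw [strongPow]; exact le_top
    | succ i =>
      refine strongPow_succ_le fun j hj u hu v hv => ?_
      cases j with
      | zero => simpa using mul_mem_strongPow hu (ih i i.lt_succ_self hv)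
      | succ j =>
        have huv := mul_mem_strongPow (ih j (by omega) hu) (show v ∈ strongPow A (i - j) by
          rwa [Nat.add_sub_add_right] at hv)
        rwa [Nat.add_sub_cancel' (by omega : j ≤ i)] at huv

theorem strongPow_le_sup_leftPow {t m : ℕ} (ht : 0 < t) (h : strongPow A t ≤ rightPow A m) :
    ∀ c, strongPow A (t * (c + 1)) ≤ rightPow A (m + 1) ⊔ leftPow A c
  | 0 => le_sup_of_le_right le_top
  | c + 1 => by
    obtain ⟨N, hN⟩ : ∃ N, t * (c + 1 + 1) = N + 1 := Nat.exists_eq_add_one.mpr (by positivity)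
    rw [hN]
    refine strongPow_succ_le fun j _ u hu v hv => ?_
    by_cases hjt : t ≤ j
    · exact AddSubgroup.mem_sup_left
        (mul_mem_subMul (h (strongPow_antitone hjt hu)) (AddSubgroup.mem_top v))
    have hdeep : t * (c + 1) ≤ N - j := by
      rw [_root_.mul_add t (c + 1) 1] at hN
      omega
    obtain ⟨v₁, hv₁, v₂, hv₂, rfl⟩ :=
      AddSubgroup.mem_sup.mp (strongPow_le_sup_leftPow ht h c (strongPow_antitone hdeep hv))
    rw [mul_add]
    exact add_mem (AddSubgroup.mem_sup_left (mul_mem_rightPow u hv₁))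
      (AddSubgroup.mem_sup_right (mul_mem_subMul (AddSubgroup.mem_top u) hv₂))

theorem strongPow_pow_le_rightPow {n : ℕ} (hl : leftPow A n = ⊥) (m : ℕ) :
    strongPow A ((n + 1) ^ m) ≤ rightPow A m := by
  induction m with
  | zero => exact le_top
  | succ m ih =>
    have h := strongPow_le_sup_leftPow (by positivity) ih n
    rwa [hl, sup_bot_eq, ← pow_succ] at h

end PreLieRing

open PreLieRing in
theorem strongly_nilpotent_bound_general (p n : ℕ) (hp : p.Prime) (A : Type*) [PreLieRing A]
    (hcard : Nat.card A = p ^ n)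
    (hl : ∃ m : ℕ, leftIdx A m = ⊥) (hr : ∃ m : ℕ, rightIdx A m = ⊥) :
    strongIdx A ((n + 1) ^ (n + 1)) = ⊥ := by
  have hL : leftPow A n = ⊥ := leftPow_eq_bot_of_card hp hcard hl
  rcases n.eq_zero_or_pos with rfl | hn
  · exact eq_bot_iff.mpr (le_top.trans hL.le)
  refine eq_bot_iff.mpr (calc
    strongIdx A ((n + 1) ^ (n + 1))
      ≤ strongPow A ((n + 1) ^ n) :=
        strongPow_antitone (Nat.le_sub_one_of_lt (Nat.pow_lt_pow_right (by omega) n.lt_succ_self))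
    _ ≤ rightPow A n := strongPow_pow_le_rightPow hL n
    _ = ⊥ := rightPow_eq_bot_of_card hp hcard hr)

open PreLieRing in
/-- a pre-Lie ring of cardinality `p^n` that is both left and right
nilpotent satisfies `A^{[(n+1)^(n+1)]} = 0`. -/
theorem strongly_nilpotent_bound (p n : ℕ) (hp : p.Prime) (A : Type*) [PreLieRing A]
    [Fintype A] (hcard : Nat.card A = p ^ n)
    (hl : ∃ m : ℕ, leftIdx A m = ⊥) (hr : ∃ m : ℕ, rightIdx A m = ⊥) :
    strongIdx A ((n + 1) ^ (n + 1)) = ⊥ :=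
  strongly_nilpotent_bound_general p n hp A hcard hl hr
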